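/- Let k be a positive integer and n ≥ (k-1)³ + 1. Then there is no permutation p of {1,...,n} such that both p and p² (the composition p∘p) avoid the increasing pattern 1 2 ⋯ k. -/
import Mathlib

open Finset

/-- Labeling lemma: to each index assign the length of the longest increasing
subsequence ending there. -/
lemma exists_label {α : Type*} [LinearOrder α] {m : ℕ} (g : Fin m → α) :
    ∃ A : Fin m → ℕ, (∀ i, 1 ≤ A i) ∧
      (∀ i j, i < j → g i < g j → A i < A j) ∧
      (∀ r i, r < A i → ∃ t : Finset (Fin m), r < t.card ∧ StrictMonoOn g ↑t) := by
  classical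
  set I : Fin m → Finset (Finset (Fin m)) := fun i =>
    Finset.univ.powerset.filter fun t => i ∈ t ∧ (∀ x ∈ t, x ≤ i) ∧ StrictMonoOn g ↑t
    with hIdef
  have hsing : ∀ i, {i} ∈ I i := by
    intro i
    simp only [hIdef]
    refine mem_filter.2 ⟨mem_powerset.2 (subset_univ _), mem_singleton_self i,
      fun x hx => le_of_eq (mem_singleton.1 hx), fun x hx y hy hxy => ?_⟩
    simp only [coe_singleton, Set.mem_singleton_iff] at hx hy
    exact absurd hxy (by rw [hx, hy]; exact lt_irrefl _)
  have hne : ∀ i, ((I i).image Finset.card).Nonempty :=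
    fun i => ⟨1, mem_image.2 ⟨{i}, hsing i, card_singleton i⟩⟩
  set A : Fin m → ℕ := fun i => ((I i).image Finset.card).max' (hne i) with hA
  refine ⟨A, ?_, ?_, ?_⟩
  · intro i
    exact le_max' _ 1 (mem_image.2 ⟨{i}, hsing i, card_singleton i⟩)
  · intro i j hij hg
    obtain ⟨t, htI, htc⟩ := mem_image.1 (max'_mem _ (hne i))
    simp only [hIdef, mem_filter, mem_powerset] at htI
    obtain ⟨-, hit, hle, htmono⟩ := htI
    have hjt : j ∉ t := fun hj => absurd hij (not_lt_of_ge (hle j hj))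
    have hmono' : StrictMonoOn g ↑(insert j t) := by
      intro x hx y hy hxy
      simp only [coe_insert, Set.mem_insert_iff, mem_coe] at hx hy
      rcases hy with rfl | hy
      · rcases hx with rfl | hx
        · exact absurd hxy (lt_irrefl _)
        · rcases lt_or_eq_of_le (hle x hx) with h | h
          · exact lt_trans (htmono hx hit h) hg
          · rw [h]; exact hg
      · rcases hx with rfl | hx
        · exact absurd (lt_trans hxy (lt_of_le_of_lt (hle y hy) hij)) (lt_irrefl _)
        · exact htmono hx hy hxy
    have hmem : insert j t ∈ I j := by
      simp only [hIdef, mem_filter, mem_powerset, subset_univ, true_and]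
      refine ⟨mem_insert_self j t, fun x hx => ?_, hmono'⟩
      rcases mem_insert.1 hx with rfl | hx
      · exact le_refl _
      · exact le_of_lt (lt_of_le_of_lt (hle x hx) hij)
    have h2 : (insert j t).card ≤ A j := le_max' _ _ (mem_image.2 ⟨insert j t, hmem, rfl⟩)
    have h3 : (insert j t).card = t.card + 1 := Finset.card_insert_of_notMem hjt
    have h4 : A i = t.card := htc.symm
    omega
  · intro r i hr
    obtain ⟨t, htI, htc⟩ := mem_image.1 (max'_mem _ (hne i))
    simp only [hIdef, mem_filter, mem_powerset] at htI
    have h5 : A i = t.card := htc.symm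
    exact ⟨t, by omega, htI.2.2.2⟩

/-- Erdős–Szekeres. -/
lemma my_es {α : Type*} [LinearOrder α] {m r s : ℕ} {g : Fin m → α}
    (hg : Function.Injective g) (h : r * s < m) :
    (∃ t : Finset (Fin m), r < t.card ∧ StrictMonoOn g ↑t) ∨
    (∃ t : Finset (Fin m), s < t.card ∧ StrictAntiOn g ↑t) := by
  obtain ⟨A, hA1, hA2, hA3⟩ := exists_label g
  obtain ⟨B, hB1, hB2, hB3⟩ := exists_label (OrderDual.toDual ∘ g)
  by_contra hc
  push_neg at hc
  obtain ⟨hcr, hcs⟩ := hc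
  have hAr : ∀ i, A i ≤ r := by
    intro i
    by_contra h'
    push_neg at h'
    obtain ⟨t, htc, htm⟩ := hA3 r i h'
    exact hcr t htc htm
  have hBr : ∀ i, B i ≤ s := by
    intro i
    by_contra h'
    push_neg at h'
    obtain ⟨t, htc, htm⟩ := hB3 s i h'
    exact hcs t htc (fun x hx y hy hxy => htm hx hy hxy)
  have hinj : Set.InjOn (fun i => (A i, B i)) ↑(Finset.univ : Finset (Fin m)) := by
    intro i _ j _ hij
    by_contra hne
    simp only [Prod.mk.injEq] at hij
    rcases lt_or_gt_of_ne hne with hlt | hlt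
    · rcases (hg.ne (ne_of_lt hlt)).lt_or_gt with h1 | h1
      · exact absurd hij.1 (ne_of_lt (hA2 i j hlt h1))
      · exact absurd hij.2 (ne_of_lt (hB2 i j hlt (OrderDual.toDual_lt_toDual.2 h1)))
    · rcases (hg.ne (ne_of_gt hlt)).lt_or_gt with h1 | h1
      · exact absurd hij.2.symm (ne_of_lt (hB2 j i hlt (OrderDual.toDual_lt_toDual.2 h1)))
      · exact absurd hij.1.symm (ne_of_lt (hA2 j i hlt h1))
  have hcard := Finset.card_le_card_of_injOn (fun i => (A i, B i))
    (fun i _ => by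
      simp only [Finset.mem_product, Finset.mem_Ioc]
      exact ⟨⟨hA1 i, hAr i⟩, hB1 i, hBr i⟩ :
      ∀ i ∈ (Finset.univ : Finset (Fin m)), (A i, B i) ∈ Finset.Ioc 0 r ×ˢ Finset.Ioc 0 s)
    hinj
  simp only [Finset.card_univ, Fintype.card_fin, Finset.card_product, Nat.card_Ioc,
    Nat.sub_zero] at hcard
  omega

lemma extract_mono {n k : ℕ} {α : Type*} [LinearOrder α] {g : Fin n → α} {t : Finset (Fin n)}
    (ht : StrictMonoOn g ↑t) (hk : k ≤ t.card) :
    ∃ f : Fin k → Fin n, StrictMono f ∧ StrictMono fun i => g (f i) := by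
  obtain ⟨t', hsub, hcard⟩ := Finset.exists_subset_card_eq hk
  refine ⟨fun i => t'.orderIsoOfFin hcard i, ?_, ?_⟩
  · intro i j hij
    exact Subtype.coe_lt_coe.2 ((t'.orderIsoOfFin hcard).strictMono hij)
  · intro i j hij
    exact ht (hsub (t'.orderIsoOfFin hcard i).2) (hsub (t'.orderIsoOfFin hcard j).2)
      (Subtype.coe_lt_coe.2 ((t'.orderIsoOfFin hcard).strictMono hij))

lemma extract_anti {n k : ℕ} {α : Type*} [LinearOrder α] {g : Fin n → α} {t : Finset (Fin n)}
    (ht : StrictAntiOn g ↑t) (hk : k ≤ t.card) :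
    ∃ f : Fin k → Fin n, StrictMono f ∧ StrictAnti fun i => g (f i) := by
  obtain ⟨t', hsub, hcard⟩ := Finset.exists_subset_card_eq hk
  refine ⟨fun i => t'.orderIsoOfFin hcard i, ?_, ?_⟩
  · intro i j hij
    exact Subtype.coe_lt_coe.2 ((t'.orderIsoOfFin hcard).strictMono hij)
  · intro i j hij
    exact ht (hsub (t'.orderIsoOfFin hcard i).2) (hsub (t'.orderIsoOfFin hcard j).2)
      (Subtype.coe_lt_coe.2 ((t'.orderIsoOfFin hcard).strictMono hij))

/-- `p` contains an increasing subsequence of length `k`, i.e. the pattern `1 2 ⋯ k`. -/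
def ContainsIncreasing {n : ℕ} (k : ℕ) (p : Equiv.Perm (Fin n)) : Prop :=
  ∃ f : Fin k → Fin n, StrictMono f ∧ StrictMono fun i => p (f i)

theorem no_strongly_monotone_avoiding {k n : ℕ} (hk : 1 ≤ k) (hn : (k - 1) ^ 3 + 1 ≤ n) :
    ¬ ∃ p : Equiv.Perm (Fin n), ¬ ContainsIncreasing k p ∧ ¬ ContainsIncreasing k (p * p) := by
  rintro ⟨p, hp, hpp⟩
  set a := k - 1 with ha
  have hak : a + 1 = k := Nat.succ_pred_eq_of_pos hk
  have h1 : a * (a * a) < n := by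
    have : a * (a * a) = a ^ 3 := by ring
    omega
  rcases my_es (g := fun i => p i) p.injective h1 with ⟨t, htc, htm⟩ | ⟨t, htc, hta⟩
  · obtain ⟨f, hf1, hf2⟩ := extract_mono (k := k) htm (by omega)
    exact hp ⟨f, hf1, hf2⟩
  · obtain ⟨x, hx1, hx2⟩ := extract_anti hta (show a * a + 1 ≤ t.card by omega)
    have hg' : Function.Injective fun i : Fin (a * a + 1) => p (p (x i)) :=
      fun i j hij => hx1.injective (p.injective (p.injective hij))
    rcases my_es hg' (show a * a < a * a + 1 by omega) with ⟨u, huc, hum⟩ | ⟨u, huc, hua⟩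
    · obtain ⟨f, hf1, hf2⟩ := extract_mono (k := k) hum (by omega)
      refine hpp ⟨fun i => x (f i), hx1.comp hf1, ?_⟩
      simpa [Equiv.Perm.mul_apply] using hf2
    · obtain ⟨f, hf1, hf2⟩ := extract_anti (k := k) hua (by omega)
      refine hp ⟨fun j => p (x (f j.rev)), ?_, ?_⟩
      · intro j1 j2 h
        exact hx2 (hf1 (Fin.rev_lt_rev.2 h))
      · intro j1 j2 h
        exact hf2 (Fin.rev_lt_rev.2 h)
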